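/- arXiv:1609.09364 — 4 statements merged into one kernel-verified Lean document; each statement's English description precedes it below -/
import Mathlib

section
/- Let Γ be a nonempty finite set and N a quadratic normalisation on Γ satisfying Condition (unit). Then the monoid generated by the Mealy automaton M_{Γ,N} has S¹ as a quotient; precisely, for all words u, v ∈ Γ*, if the production functions σ_u and σ_v are equal as functions Γ* → Γ*, then (u, v) lies in the monoid congruence on Γ* generated by all pairs (w, N(w)) for w ∈ Γ⁺ together with the pair ([𝟙], ε). -/
namespace Stmt0

variable {α : Type}

/-- Apply the two-letter normalisation `nf` at (1-indexed) position `i` of a word. -/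
def applyAtL (nf : α → α → List α) : ℕ → List α → List α
  | 1, x :: y :: s => nf x y ++ s
  | n + 2, x :: s => x :: applyAtL nf (n + 1) s
  | _, w => w

/-- Apply the two-letter normalisation along a finite sequence of positions
(the first position in the list is applied first). -/
def seqApplyL (nf : α → α → List α) (l : List ℕ) (w : List α) : List α :=
  l.foldl (fun w i => applyAtL nf i w) w

/-- Production function of the Mealy automaton `M_{Γ,N}` with state `x`:
`σ_x(ε) = ε` and `σ_x(i :: s) = σ_x(i) :: σ_{τ_i(x)}(s)`. -/
def prodFn (tau sig : α → α → α) : α → List α → List α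
  | _, [] => []
  | x, i :: s => sig x i :: prodFn tau sig (tau i x) s

/-- Production function of a word `u = x₁⋯xₙ`: `σ_u = σ_{xₙ} ∘ ⋯ ∘ σ_{x₁}`. -/
def prodWord (tau sig : α → α → α) : List α → List α → List α
  | [], s => s
  | x :: u, s => prodWord tau sig u (prodFn tau sig x s)

/-- The defining relations of the monoid `S¹`: all pairs `(w, N w)` for nonempty `w`,
together with the pair `([𝟙], ε)`. -/
def presRel (N : List α → List α) (e : α) : FreeMonoid α → FreeMonoid α → Prop :=
  fun x y =>
    (FreeMonoid.toList x ≠ [] ∧ FreeMonoid.toList y = N (FreeMonoid.toList x)) ∨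
      (FreeMonoid.toList x = [e] ∧ FreeMonoid.toList y = [])

/-- Final state of the Mealy automaton after reading `s` from state `x`. -/
def finalSt (tau : α → α → α) : α → List α → α
  | x, [] => x
  | x, i :: s => finalSt tau (tau i x) s

/-- The word of final states produced while letting the letters of `u` act successively. -/
def stateWord (tau sig : α → α → α) : List α → List α → List α
  | [], _ => []
  | x :: u, s => finalSt tau x s :: stateWord tau sig u (prodFn tau sig x s)

theorem prodFn_append (tau sig : α → α → α) (x : α) (g t : List α) :
    prodFn tau sig x (g ++ t) = prodFn tau sig x g ++ prodFn tau sig (finalSt tau x g) t := by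
  induction g generalizing x with
  | nil => rfl
  | cons i g ih => simp [prodFn, finalSt, ih]

theorem finalSt_append (tau : α → α → α) (x : α) (g t : List α) :
    finalSt tau x (g ++ t) = finalSt tau (finalSt tau x g) t := by
  induction g generalizing x with
  | nil => rfl
  | cons i g ih => simp [finalSt, ih]

section EFacts

variable (tau sig : α → α → α) (e : α)
variable (htau : ∀ x, tau e x = e) (hsig : ∀ x, sig x e = x)

include htau hsig in
theorem prodFn_e_replicate (m : ℕ) :
    prodFn tau sig e (List.replicate m e) = List.replicate m e := by
  induction m with
  | zero => rfl
  | succ m ih => simp [List.replicate_succ, prodFn, htau, hsig, ih]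

include htau hsig in
theorem prodFn_replicate (x : α) (m : ℕ) :
    prodFn tau sig x (List.replicate (m + 1) e) = x :: List.replicate m e := by
  simp [List.replicate_succ, prodFn, htau, hsig, prodFn_e_replicate tau sig e htau hsig]

include htau in
theorem finalSt_e_replicate (m : ℕ) : finalSt tau e (List.replicate m e) = e := by
  induction m with
  | zero => rfl
  | succ m ih => simp [List.replicate_succ, finalSt, htau, ih]

include htau in
theorem finalSt_replicate (x : α) (m : ℕ) :
    finalSt tau x (List.replicate (m + 1) e) = e := by
  simp [List.replicate_succ, finalSt, htau, finalSt_e_replicate tau e htau]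

include htau hsig in
theorem stateWord_replicate :
    ∀ (u g : List α) (k : ℕ), u.length ≤ k →
      stateWord tau sig u (g ++ List.replicate k e) = List.replicate u.length e := by
  intro u
  induction u with
  | nil => intro g k _; rfl
  | cons x u ih =>
    intro g k hk
    obtain ⟨k', rfl⟩ : ∃ k', k = k' + 1 := ⟨k - 1, by simp at hk; omega⟩
    have h1 : finalSt tau x (g ++ List.replicate (k' + 1) e) = e := by
      rw [finalSt_append, finalSt_replicate tau e htau]
    have h2 : prodFn tau sig x (g ++ List.replicate (k' + 1) e) =
        (prodFn tau sig x g ++ [finalSt tau x g]) ++ List.replicate k' e := by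
      rw [prodFn_append, prodFn_replicate tau sig e htau hsig]
      simp
    simp only [stateWord, h1, h2]
    rw [ih _ k' (by simp at hk; omega)]
    simp [List.replicate_succ]

end EFacts

section Cong

variable (N : List α → List α) (tau sig : α → α → α) (e : α)
variable (hNbar : ∀ x y : α, N [x, y] = [tau x y, sig y x])

include hNbar in
theorem push_one :
    ∀ (s : List α) (x : α),
      ConGen.Rel (presRel N e) (FreeMonoid.ofList (s.reverse ++ [x]))
        (FreeMonoid.ofList (finalSt tau x s :: (prodFn tau sig x s).reverse)) := by
  intro s
  induction s with
  | nil => intro x; exact ConGen.Rel.refl _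
  | cons i s ih =>
    intro x
    have h1 : ConGen.Rel (presRel N e)
        (FreeMonoid.ofList [i, x]) (FreeMonoid.ofList [tau i x, sig x i]) := by
      apply ConGen.Rel.of
      left
      exact ⟨by simp [FreeMonoid.toList_ofList], by simp [FreeMonoid.toList_ofList, hNbar]⟩
    have hA : ConGen.Rel (presRel N e)
        (FreeMonoid.ofList ((i :: s).reverse ++ [x]))
        (FreeMonoid.ofList ((s.reverse ++ [tau i x]) ++ [sig x i])) := by
      have e1 : (i :: s).reverse ++ [x] = s.reverse ++ [i, x] := by simp
      have e2 : (s.reverse ++ [tau i x]) ++ [sig x i] = s.reverse ++ [tau i x, sig x i] := by simp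
      rw [e1, e2, FreeMonoid.ofList_append, FreeMonoid.ofList_append]
      exact ConGen.Rel.mul (ConGen.Rel.refl _) h1
    have hB : ConGen.Rel (presRel N e)
        (FreeMonoid.ofList ((s.reverse ++ [tau i x]) ++ [sig x i]))
        (FreeMonoid.ofList ((finalSt tau (tau i x) s :: (prodFn tau sig (tau i x) s).reverse)
          ++ [sig x i])) := by
      rw [FreeMonoid.ofList_append, FreeMonoid.ofList_append]
      exact ConGen.Rel.mul (ih (tau i x)) (ConGen.Rel.refl _)
    have e3 : (finalSt tau (tau i x) s :: (prodFn tau sig (tau i x) s).reverse) ++ [sig x i]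
        = finalSt tau x (i :: s) :: (prodFn tau sig x (i :: s)).reverse := by
      simp [finalSt, prodFn]
    rw [e3] at hB
    exact hA.trans hB

include hNbar in
theorem push_word :
    ∀ (u s : List α),
      ConGen.Rel (presRel N e) (FreeMonoid.ofList (s.reverse ++ u))
        (FreeMonoid.ofList (stateWord tau sig u s ++ (prodWord tau sig u s).reverse)) := by
  intro u
  induction u with
  | nil => intro s; simp only [List.append_nil, stateWord, prodWord]; exact ConGen.Rel.refl _
  | cons x u ih =>
    intro s
    have hA : ConGen.Rel (presRel N e)
        (FreeMonoid.ofList (s.reverse ++ (x :: u)))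
        (FreeMonoid.ofList ((finalSt tau x s :: (prodFn tau sig x s).reverse) ++ u)) := by
      have e1 : s.reverse ++ (x :: u) = (s.reverse ++ [x]) ++ u := by simp
      rw [e1, FreeMonoid.ofList_append, FreeMonoid.ofList_append]
      exact ConGen.Rel.mul (push_one N tau sig e hNbar s x) (ConGen.Rel.refl _)
    have hB : ConGen.Rel (presRel N e)
        (FreeMonoid.ofList ((finalSt tau x s :: (prodFn tau sig x s).reverse) ++ u))
        (FreeMonoid.ofList (stateWord tau sig (x :: u) s
          ++ (prodWord tau sig (x :: u) s).reverse)) := by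
      have e2 : (finalSt tau x s :: (prodFn tau sig x s).reverse) ++ u
          = [finalSt tau x s] ++ ((prodFn tau sig x s).reverse ++ u) := by simp
      have e3 : stateWord tau sig (x :: u) s ++ (prodWord tau sig (x :: u) s).reverse
          = [finalSt tau x s] ++ (stateWord tau sig u (prodFn tau sig x s)
              ++ (prodWord tau sig u (prodFn tau sig x s)).reverse) := by
        simp [stateWord, prodWord]
      rw [e2, e3, FreeMonoid.ofList_append, FreeMonoid.ofList_append]
      exact ConGen.Rel.mul (ConGen.Rel.refl _) (ih (prodFn tau sig x s))
    exact hA.trans hB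

theorem erase_e (w : List α) (k : ℕ) :
    ConGen.Rel (presRel N e)
      (FreeMonoid.ofList (List.replicate k e ++ w)) (FreeMonoid.ofList w) := by
  induction k with
  | zero => exact ConGen.Rel.refl _
  | succ k ih =>
    have h1 : ConGen.Rel (presRel N e) (FreeMonoid.ofList [e]) (1 : FreeMonoid α) := by
      apply ConGen.Rel.of
      right
      exact ⟨rfl, rfl⟩
    have h2 := ConGen.Rel.mul h1 ih
    have e1 : FreeMonoid.ofList [e] * FreeMonoid.ofList (List.replicate k e ++ w)
        = FreeMonoid.ofList (List.replicate (k + 1) e ++ w) := by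
      rw [← FreeMonoid.ofList_append]
      simp [List.replicate_succ]
    rw [e1, one_mul] at h2
    exact h2

end Cong

/-- Lemma `lem-easy`: for a quadratic normalisation `(Γ,N)` satisfying
Condition (unit), the monoid generated by the Mealy automaton `M_{Γ,N}` has `S¹` as a
quotient: equality of production functions implies congruence of the words in `S¹`. -/
theorem mealy_monoid_has_S1_as_quotient
    {Γ : Type} [Fintype Γ] [Nonempty Γ]
    (N : List Γ → List Γ) (tau sig : Γ → Γ → Γ) (e : Γ)
    (hlen : ∀ w : List Γ, (N w).length = w.length)
    (hone : ∀ x : Γ, N [x] = [x])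
    (habs : ∀ u w v : List Γ, w ≠ [] → N (u ++ N w ++ v) = N (u ++ w ++ v))
    (hquad₁ : ∀ w : List Γ, w ≠ [] →
      (N w = w ↔ ∀ p s : List Γ, ∀ x y : Γ, w = p ++ [x, y] ++ s → N [x, y] = [x, y]))
    (hquad₂ : ∀ w : List Γ, w ≠ [] →
      ∃ l : List ℕ, N w = seqApplyL (fun x y => N [x, y]) l w)
    (hNbar : ∀ x y : Γ, N [x, y] = [tau x y, sig y x])
    (hunit : ∀ w : List Γ, w ≠ [] →
      N (e :: w) = e :: N w ∧ N (w ++ [e]) = e :: N w) :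
    ∀ u v : List Γ, prodWord tau sig u = prodWord tau sig v →
      conGen (presRel N e) (FreeMonoid.ofList u) (FreeMonoid.ofList v) := by
  -- unit facts for tau and sig
  have hNe : ∀ x : Γ, N [e, x] = [e, x] := by
    intro x
    have := (hunit [x] (by simp)).1
    simpa [hone] using this
  have htau : ∀ x : Γ, tau e x = e := by
    intro x
    have h := (hNbar e x).symm.trans (hNe x)
    exact (List.cons.injEq _ _ _ _ ▸ h : _) |>.1
  have hsig : ∀ x : Γ, sig x e = x := by
    intro x
    have h := (hNbar e x).symm.trans (hNe x)
    have := h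
    simp only [List.cons.injEq] at this
    exact this.2.1
  intro u v h
  -- every word is congruent to the reverse of its production on e^n, for n large
  have key : ∀ (w : List Γ) (n : ℕ), w.length ≤ n →
      ConGen.Rel (presRel N e) (FreeMonoid.ofList w)
        (FreeMonoid.ofList ((prodWord tau sig w (List.replicate n e)).reverse)) := by
    intro w n hn
    have h1 := (erase_e N e w n).symm
    have h2 := push_word N tau sig e hNbar w (List.replicate n e)
    rw [List.reverse_replicate] at h2
    have hst : stateWord tau sig w (List.replicate n e) = List.replicate w.length e := by
      have := stateWord_replicate tau sig e htau hsig w [] n hn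
      simpa using this
    rw [hst] at h2
    have h3 := erase_e N e ((prodWord tau sig w (List.replicate n e)).reverse) w.length
    exact h1.trans (h2.trans h3)
  have hu := key u (max u.length v.length) (le_max_left _ _)
  have hv := key v (max u.length v.length) (le_max_right _ _)
  rw [h] at hu
  exact hu.trans hv.symm

end Stmt0
end

section
/- The Malcev monoid, i.e., the monoid presented by ⟨a, b, c, d, a', b', c', d' | ab = cd, a'b' = c'd', a'd = c'b⟩, is residually finite: for any two distinct elements x, y there exist a finite monoid F and a monoid homomorphism f to F with f(x) ≠ f(y). -/
namespace Stmt17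

/-- A monoid `M` is residually finite if distinct elements can be separated by a
homomorphism to a finite monoid. -/
def ResiduallyFinite (M : Type) [Monoid M] : Prop :=
  ∀ x y : M, x ≠ y →
    ∃ (F : Type) (mF : Monoid F)
      (f : @MonoidHom M F (@Monoid.toMulOneClass M _).toMulOne mF.toMulOneClass.toMulOne),
      Finite F ∧ f x ≠ f y

/-- The generators of the Malcev monoid. -/
inductive X : Type
  | a : X
  | b : X
  | c : X
  | d : X
  | a' : X
  | b' : X
  | c' : X
  | d' : X
  deriving DecidableEq

instance : Fintype X :=
  ⟨{X.a, X.b, X.c, X.d, X.a', X.b', X.c', X.d'}, fun x => by cases x <;> simp⟩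

/-- The defining relations of the Malcev monoid:
`ab = cd`, `a'b' = c'd'`, `a'd = c'b`. -/
def malcevRel : FreeMonoid X → FreeMonoid X → Prop :=
  fun u v =>
    (u = FreeMonoid.ofList [X.a, X.b] ∧ v = FreeMonoid.ofList [X.c, X.d]) ∨
    (u = FreeMonoid.ofList [X.a', X.b'] ∧ v = FreeMonoid.ofList [X.c', X.d']) ∨
    (u = FreeMonoid.ofList [X.a', X.d] ∧ v = FreeMonoid.ofList [X.c', X.b])

/-- The Malcev monoid `⟨a,b,c,d,a',b',c',d' | ab = cd, a'b' = c'd', a'd = c'b⟩`. -/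
def MalcevMonoid : Type := (conGen malcevRel).Quotient

instance : Monoid MalcevMonoid := by unfold MalcevMonoid; infer_instance

/-! The defining relations are length-preserving, so word length descends to an additive
length on the presented monoid, and since there are finitely many generators only finitely many
elements have length `≤ N`. Collapsing all elements of length `> N` to a single zero (a Rees
quotient) gives a finite monoid in which any two distinct elements of length `≤ N` stay
distinct. -/

section Truncation

variable {M : Type} [Monoid M] (ℓ : M → ℕ)

/-- The Rees congruence of the ideal `{x | N < ℓ x}`. -/
def truncCon (hℓ : ∀ x y, max (ℓ x) (ℓ y) ≤ ℓ (x * y)) (N : ℕ) : Con M where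
  r x y := x = y ∨ (N < ℓ x ∧ N < ℓ y)
  iseqv := by
    constructor
    · exact fun _ => Or.inl rfl
    · rintro x y (rfl | ⟨hx, hy⟩)
      exacts [Or.inl rfl, Or.inr ⟨hy, hx⟩]
    · rintro x y z (rfl | ⟨hx, hy⟩) (rfl | ⟨hy', hz⟩)
      exacts [Or.inl rfl, Or.inr ⟨hy', hz⟩, Or.inr ⟨hx, hy⟩, Or.inr ⟨hx, hz⟩]
  mul' := by
    have left := fun x y => (le_max_left _ _).trans (hℓ x y)
    have right := fun x y => (le_max_right _ _).trans (hℓ x y)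
    rintro w x y z (rfl | ⟨hw, hx⟩) (rfl | ⟨hy, hz⟩)
    · exact Or.inl rfl
    · exact Or.inr ⟨hy.trans_le (right w y), hz.trans_le (right w z)⟩
    · exact Or.inr ⟨hw.trans_le (left w y), hx.trans_le (left x y)⟩
    · exact Or.inr ⟨hw.trans_le (left w y), hx.trans_le (left x z)⟩

theorem finite_truncCon_quotient (hℓ : ∀ x y, max (ℓ x) (ℓ y) ≤ ℓ (x * y)) {N : ℕ} (hfin : {x | ℓ x ≤ N}.Finite) :
    Finite (truncCon ℓ hℓ N).Quotient := by
  have := hfin.to_subtype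
  let short (x : M) : Option {x | ℓ x ≤ N} := if h : ℓ x ≤ N then some ⟨x, h⟩ else none
  have short_eq (x y : M) (hxy : truncCon ℓ hℓ N x y) : short x = short y := by
    rcases hxy with rfl | ⟨hx, hy⟩
    · rfl
    · simp [short, hx.not_ge, hy.not_ge]
  refine Finite.of_injective (fun q => Con.liftOn q short short_eq) fun p q => ?_
  induction p using Con.induction_on with | H x => ?_
  induction q using Con.induction_on with | H y => ?_
  intro hxy
  refine (truncCon ℓ hℓ N).eq.mpr ?_
  change short x = short y at hxy
  by_cases hx : ℓ x ≤ N <;> by_cases hy : ℓ y ≤ N <;> simp_all [short, truncCon]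

theorem residuallyFinite_of_finite_length_le (hℓ : ∀ x y, max (ℓ x) (ℓ y) ≤ ℓ (x * y))
    (hfin : ∀ N, {x | ℓ x ≤ N}.Finite) :
    ResiduallyFinite M := by
  intro x y hxy
  let N := max (ℓ x) (ℓ y)
  refine ⟨(truncCon ℓ hℓ N).Quotient, inferInstance, (truncCon ℓ hℓ N).mk',
    finite_truncCon_quotient ℓ hℓ (hfin N), fun h => ?_⟩
  rcases (truncCon ℓ hℓ N).eq.mp h with h | ⟨hx, hy⟩
  · exact hxy h
  · exact (le_max_left _ _).not_gt hx

end Truncation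

section Homogeneous

variable {α : Type} {r : FreeMonoid α → FreeMonoid α → Prop}

theorem length_eq_of_conGen (hr : ∀ u v, r u v → u.length = v.length) {u v : FreeMonoid α}
    (h : conGen r u v) : u.length = v.length := by
  induction h with
  | of u v huv => exact hr u v huv
  | refl => rfl
  | symm _ ih => exact ih.symm
  | trans _ _ ih₁ ih₂ => exact ih₁.trans ih₂
  | mul _ _ ih₁ ih₂ => simp only [FreeMonoid.length_mul, ih₁, ih₂]

variable (hr : ∀ u v, r u v → u.length = v.length)

def presentedLength (q : (conGen r).Quotient) : ℕ :=
  Con.liftOn q FreeMonoid.length fun _ _ => length_eq_of_conGen hr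

theorem presentedLength_mul (p q : (conGen r).Quotient) :
    max (presentedLength hr p) (presentedLength hr q) ≤ presentedLength hr (p * q) := by
  induction p using Con.induction_on with | H u => ?_
  induction q using Con.induction_on with | H v => ?_
  change max u.length v.length ≤ (u * v).length
  rw [FreeMonoid.length_mul]
  omega

theorem finite_presentedLength_le [Finite α] (N : ℕ) :
    {q | presentedLength hr q ≤ N}.Finite := by
  refine ((List.finite_length_le α N).image
    fun l => ((FreeMonoid.ofList l : FreeMonoid α) : (conGen r).Quotient)).subset ?_
  intro q hq
  induction q using Con.induction_on with | H u => exact ⟨u.toList, hq, rfl⟩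

end Homogeneous

theorem residuallyFinite_conGen_quotient {α : Type} [Finite α]
    {r : FreeMonoid α → FreeMonoid α → Prop} (hr : ∀ u v, r u v → u.length = v.length) :
    ResiduallyFinite (conGen r).Quotient :=
  residuallyFinite_of_finite_length_le _ (presentedLength_mul hr) (finite_presentedLength_le hr)

theorem malcevRel_length_eq (u v : FreeMonoid X) (h : malcevRel u v) : u.length = v.length := by
  rcases h with ⟨rfl, rfl⟩ | ⟨rfl, rfl⟩ | ⟨rfl, rfl⟩ <;> rfl

/-- Example `ex-malcev` with Corollary `cor-resid`: the Malcev
monoid is residually finite. -/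
theorem malcev_residually_finite : ResiduallyFinite MalcevMonoid :=
  residuallyFinite_conGen_quotient malcevRel_length_eq

end Stmt17
end

section
/- The Baumslag–Solitar monoid BS⁺(3,2), i.e., the monoid presented by ⟨a, b | a b³ = b² a⟩, is residually finite: for any two distinct elements x, y there exist a finite monoid F and a monoid homomorphism f to F with f(x) ≠ f(y). -/
/-!
The assignment `a ↦ diag(2, 3)`, `b ↦ [[1, 1], [0, 1]]` respects `a b³ = b² a` and is faithful, and
a monoid of natural `2 × 2` matrices is residually finite by reducing entries modulo a large `N`.

Faithfulness: from `a b^(3q + r) = b^(2q) a b^r` every element has a normal form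
`b^n (a b^r₁) ⋯ (a b^rₖ)` with all `rᵢ < 3`, whose image is `[[2^k, e], [0, 3^k]]`. Appending
`a b^r` to an element with image `[[2^k, e], [0, 3^k]]` turns `e` into `2^(k+1) r + 3 e`, and
`2^(k+1)` is a unit modulo `3`, so the image determines the last digit, then the rest.
-/

namespace Stmt18

/-- A monoid `M` is residually finite if distinct elements can be separated by a
homomorphism to a finite monoid. -/
def ResiduallyFinite (M : Type) [Monoid M] : Prop :=
  ∀ x y : M, x ≠ y →
    ∃ (F : Type) (mF : Monoid F)
      (f : @MonoidHom M F (@MulOneClass.toMulOne M Monoid.toMulOneClass)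
        (@MulOneClass.toMulOne F mF.toMulOneClass)),
      Finite F ∧ f x ≠ f y

/-- The generators of the Baumslag–Solitar monoid `BS⁺(3,2)`. -/
inductive X : Type
  | a : X
  | b : X
  deriving DecidableEq

instance instFintypeX : Fintype X :=
  ⟨{X.a, X.b}, fun x => by cases x <;> simp⟩

/-- The defining relation of `BS⁺(3,2)`: `a b³ = b² a`. -/
def bsRel : FreeMonoid X → FreeMonoid X → Prop :=
  fun u v =>
    u = FreeMonoid.ofList [X.a, X.b, X.b, X.b] ∧ v = FreeMonoid.ofList [X.b, X.b, X.a]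

/-- The Baumslag–Solitar monoid `BS⁺(3,2) = ⟨a, b | a b³ = b² a⟩`. -/
def BS32 : Type := (conGen bsRel).Quotient

instance : Monoid BS32 := by unfold BS32; infer_instance

namespace ResiduallyFinite

theorem of_injective {M N : Type} [Monoid M] [Monoid N] (f : M →* N)
    (hf : Function.Injective f) (hN : ResiduallyFinite N) : ResiduallyFinite M := by
  intro x y hxy
  obtain ⟨F, _, g, hF, hg⟩ := hN (f x) (f y) (hf.ne hxy)
  exact ⟨F, _, g.comp f, hF, hg⟩

end ResiduallyFinite

theorem residuallyFinite_matrix_nat (n : Type) [Fintype n] [DecidableEq n] :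
    ResiduallyFinite (Matrix n n ℕ) := by
  intro x y hxy
  obtain ⟨i, j, hij⟩ : ∃ i j, x i j ≠ y i j := by
    by_contra! h
    exact hxy (Matrix.ext h)
  set N := x i j + y i j + 1
  refine ⟨Matrix n n (ZMod N), inferInstance,
    (Nat.castRingHom (ZMod N)).mapMatrix.toMonoidHom, inferInstance, fun h => hij ?_⟩
  have hcast : (x i j : ZMod N) = y i j := congrFun (congrFun h i) j
  rwa [ZMod.natCast_eq_natCast_iff', Nat.mod_eq_of_lt (by omega),
    Nat.mod_eq_of_lt (by omega)] at hcast

def triMatrix (k m : ℕ) : Matrix (Fin 2) (Fin 2) ℕ := !![2 ^ k, m; 0, 3 ^ k]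

theorem triMatrix_zero_zero : triMatrix 0 0 = 1 := by
  simp [triMatrix, Matrix.one_fin_two]

theorem triMatrix_mul_triMatrix (k m l m' : ℕ) :
    triMatrix k m * triMatrix l m' = triMatrix (k + l) (2 ^ k * m' + m * 3 ^ l) := by
  ext i j
  fin_cases i <;> fin_cases j <;> simp [triMatrix, Matrix.mul_apply, pow_add]

theorem triMatrix_inj {k m k' m' : ℕ} : triMatrix k m = triMatrix k' m' ↔ k = k' ∧ m = m' := by
  refine ⟨fun h => ⟨?_, ?_⟩, by rintro ⟨rfl, rfl⟩; rfl⟩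
  · exact Nat.pow_right_injective le_rfl (by simpa [triMatrix] using congrFun (congrFun h 0) 0)
  · simpa [triMatrix] using congrFun (congrFun h 0) 1

theorem digit_cancel {k m m' : ℕ} {r r' : Fin 3}
    (h : 2 ^ k * r + 3 * m = 2 ^ k * r' + 3 * m') : r = r' ∧ m = m' := by
  have hmod : 2 ^ k * (r : ℕ) ≡ 2 ^ k * r' [MOD 3] := by
    have h3 := congrArg (· % 3) h
    simp only [Nat.add_mul_mod_self_left] at h3
    exact h3
  have hr : r = r' := Fin.ext <|
    (Nat.ModEq.cancel_left_of_coprime (Nat.Coprime.pow_right k (by norm_num)) hmod).eq_of_lt_of_lt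
      r.isLt r'.isLt
  subst hr
  exact ⟨rfl, by omega⟩

namespace BS32

def mk : FreeMonoid X →* BS32 := (conGen bsRel).mk'

def a : BS32 := mk (FreeMonoid.of X.a)

def b : BS32 := mk (FreeMonoid.of X.b)

theorem a_mul_b_pow_three : a * b ^ 3 = b ^ 2 * a := by
  have h : mk (FreeMonoid.ofList [X.a, X.b, X.b, X.b]) = mk (FreeMonoid.ofList [X.b, X.b, X.a]) :=
    (Con.eq _).2 (ConGen.Rel.of _ _ ⟨rfl, rfl⟩)
  simpa [a, b, pow_succ, mul_assoc, FreeMonoid.ofList_cons] using h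

theorem a_mul_b_pow (q r : ℕ) : a * b ^ (3 * q + r) = b ^ (2 * q) * a * b ^ r := by
  induction q with
  | zero => simp
  | succ q ih =>
    calc a * b ^ (3 * (q + 1) + r) = a * b ^ 3 * b ^ (3 * q + r) := by
          rw [mul_assoc, ← pow_add]; ring_nf
      _ = b ^ 2 * (b ^ (2 * q) * a * b ^ r) := by rw [a_mul_b_pow_three, mul_assoc, ih]
      _ = b ^ (2 * (q + 1)) * a * b ^ r := by
          rw [← mul_assoc, ← mul_assoc, ← pow_add]; ring_nf

@[elab_as_elim]
theorem induction_on {p : BS32 → Prop} (x : BS32) (one : p 1) (a_mul : ∀ x, p x → p (a * x))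
    (b_mul : ∀ x, p x → p (b * x)) : p x := by
  obtain ⟨w, rfl⟩ := Con.mk'_surjective x
  induction w using FreeMonoid.inductionOn' with
  | one => exact one
  | of_mul g w ih =>
    rw [map_mul]
    cases g
    · exact a_mul _ ih
    · exact b_mul _ ih

def nf (n : ℕ) (L : List (Fin 3)) : BS32 := b ^ n * (L.map fun r : Fin 3 => a * b ^ (r : ℕ)).prod

theorem nf_nil (n : ℕ) : nf n [] = b ^ n := by
  rw [nf, List.map_nil, List.prod_nil, mul_one]

theorem nf_append_singleton (n : ℕ) (L : List (Fin 3)) (r : Fin 3) :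
    nf n (L ++ [r]) = nf n L * (a * b ^ (r : ℕ)) := by
  simp [nf, mul_assoc]

theorem b_mul_nf (n : ℕ) (L : List (Fin 3)) : b * nf n L = nf (n + 1) L := by
  rw [nf, nf, ← mul_assoc, pow_succ']

theorem a_mul_nf (n : ℕ) (L : List (Fin 3)) :
    a * nf n L = nf (2 * (n / 3)) (Fin.ofNat 3 n :: L) := by
  rw [nf, nf, ← mul_assoc]
  nth_rw 1 [← Nat.div_add_mod n 3]
  simp [a_mul_b_pow, mul_assoc]

theorem exists_eq_nf (x : BS32) : ∃ n L, x = nf n L := by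
  induction x using induction_on with
  | one => exact ⟨0, [], by rw [nf_nil, pow_zero]⟩
  | a_mul x ih =>
    obtain ⟨n, L, rfl⟩ := ih
    exact ⟨_, _, a_mul_nf n L⟩
  | b_mul x ih =>
    obtain ⟨n, L, rfl⟩ := ih
    exact ⟨_, _, b_mul_nf n L⟩

def genMatrix : X → Matrix (Fin 2) (Fin 2) ℕ
  | X.a => triMatrix 1 0
  | X.b => triMatrix 0 1

def toMatrix : BS32 →* Matrix (Fin 2) (Fin 2) ℕ :=
  (conGen bsRel).lift (FreeMonoid.lift genMatrix) <| Con.conGen_le.2 <| by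
    rintro _ _ ⟨rfl, rfl⟩
    simp [genMatrix, triMatrix_mul_triMatrix]

theorem toMatrix_mk (w : FreeMonoid X) : toMatrix (mk w) = FreeMonoid.lift genMatrix w :=
  Con.lift_mk' _ _

theorem toMatrix_a : toMatrix a = triMatrix 1 0 := by
  rw [a, toMatrix_mk, FreeMonoid.lift_eval_of, genMatrix]

theorem toMatrix_b : toMatrix b = triMatrix 0 1 := by
  rw [b, toMatrix_mk, FreeMonoid.lift_eval_of, genMatrix]

theorem toMatrix_b_pow (n : ℕ) : toMatrix (b ^ n) = triMatrix 0 n := by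
  induction n with
  | zero => rw [pow_zero, map_one, triMatrix_zero_zero]
  | succ n ih => rw [pow_succ', map_mul, ih, toMatrix_b, triMatrix_mul_triMatrix]; simp

theorem exists_toMatrix_eq_triMatrix (x : BS32) : ∃ k m, toMatrix x = triMatrix k m := by
  induction x using induction_on with
  | one => exact ⟨0, 0, by rw [map_one, triMatrix_zero_zero]⟩
  | a_mul x ih =>
    obtain ⟨k, m, h⟩ := ih
    exact ⟨_, _, by rw [map_mul, h, toMatrix_a, triMatrix_mul_triMatrix]⟩
  | b_mul x ih =>
    obtain ⟨k, m, h⟩ := ih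
    exact ⟨_, _, by rw [map_mul, h, toMatrix_b, triMatrix_mul_triMatrix]⟩

theorem toMatrix_mul_a_mul_b_pow {x : BS32} {k m : ℕ} (hx : toMatrix x = triMatrix k m) (r : ℕ) :
    toMatrix (x * (a * b ^ r)) = triMatrix (k + 1) (2 ^ (k + 1) * r + 3 * m) := by
  rw [map_mul, map_mul, hx, toMatrix_a, toMatrix_b_pow, triMatrix_mul_triMatrix,
    triMatrix_mul_triMatrix]
  congr 1
  ring

theorem toMatrix_mul_a_mul_b_pow_cancel {x y : BS32} {r r' : Fin 3}
    (h : toMatrix (x * (a * b ^ (r : ℕ))) = toMatrix (y * (a * b ^ (r' : ℕ)))) :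
    r = r' ∧ toMatrix x = toMatrix y := by
  obtain ⟨k, m, hx⟩ := exists_toMatrix_eq_triMatrix x
  obtain ⟨k', m', hy⟩ := exists_toMatrix_eq_triMatrix y
  rw [toMatrix_mul_a_mul_b_pow hx, toMatrix_mul_a_mul_b_pow hy, triMatrix_inj] at h
  obtain ⟨hk, h⟩ := h
  obtain rfl : k = k' := by omega
  obtain ⟨rfl, rfl⟩ := digit_cancel h
  exact ⟨rfl, hx.trans hy.symm⟩

theorem toMatrix_b_pow_ne_mul_a_mul_b_pow (n : ℕ) (x : BS32) (r : ℕ) :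
    toMatrix (b ^ n) ≠ toMatrix (x * (a * b ^ r)) := by
  obtain ⟨k, m, hx⟩ := exists_toMatrix_eq_triMatrix x
  rw [toMatrix_b_pow, toMatrix_mul_a_mul_b_pow hx, Ne, triMatrix_inj]
  omega

theorem eq_of_toMatrix_nf_eq {n n' : ℕ} {L L' : List (Fin 3)}
    (h : toMatrix (nf n L) = toMatrix (nf n' L')) : n = n' ∧ L = L' := by
  induction L using List.reverseRecOn generalizing L' with
  | nil =>
    cases L' using List.reverseRecOn with
    | nil => simpa [nf_nil, toMatrix_b_pow, triMatrix_inj] using h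
    | append_singleton L' r' =>
      rw [nf_nil, nf_append_singleton] at h
      exact absurd h (toMatrix_b_pow_ne_mul_a_mul_b_pow _ _ _)
  | append_singleton L r ih =>
    cases L' using List.reverseRecOn with
    | nil =>
      rw [nf_nil, nf_append_singleton] at h
      exact absurd h.symm (toMatrix_b_pow_ne_mul_a_mul_b_pow _ _ _)
    | append_singleton L' r' =>
      rw [nf_append_singleton, nf_append_singleton] at h
      obtain ⟨rfl, hL⟩ := toMatrix_mul_a_mul_b_pow_cancel h
      obtain ⟨rfl, rfl⟩ := ih hL
      exact ⟨rfl, rfl⟩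

theorem toMatrix_injective : Function.Injective toMatrix := by
  intro x y h
  obtain ⟨n, L, rfl⟩ := exists_eq_nf x
  obtain ⟨n', L', rfl⟩ := exists_eq_nf y
  obtain ⟨rfl, rfl⟩ := eq_of_toMatrix_nf_eq h
  rfl

end BS32

/-- Example `ex-bsThreeTwo` with Corollary `cor-resid`: the
Baumslag–Solitar monoid `BS⁺(3,2)` is residually finite. -/
theorem bs32_residually_finite : ResiduallyFinite BS32 :=
  (residuallyFinite_matrix_nat (Fin 2)).of_injective BS32.toMatrix BS32.toMatrix_injective

end Stmt18
end

section
/- The Artin–Krammer monoid presented by ⟨a, b, c | abab = aba, ac = ca, bcbc = bcb⟩ is residually finite: for any two distinct elements x, y there exist a finite monoid F and a monoid homomorphism f to F with f(x) ≠ f(y). -/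
namespace Stmt19

/-- A monoid `M` is residually finite if distinct elements can be separated by a
homomorphism to a finite monoid. -/
def ResiduallyFinite (M : Type) [Monoid M] : Prop :=
  ∀ x y : M, x ≠ y →
    ∃ (F : Type) (mF : Monoid F)
      (f : @MonoidHom M F (Monoid.toMulOneClass (M := M)).toMulOne mF.toMulOneClass.toMulOne),
      Finite F ∧ f x ≠ f y

/-- The generators of the Artin–Krammer monoid. -/
inductive X : Type
  | a : X
  | b : X
  | c : X
  deriving DecidableEq

instance : Fintype X := ⟨{X.a, X.b, X.c}, fun x => by cases x <;> simp⟩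

/-- The defining relations of the Artin–Krammer monoid:
`abab = aba`, `ac = ca`, `bcbc = bcb`. -/
def akRel : FreeMonoid X → FreeMonoid X → Prop :=
  fun u v =>
    (u = FreeMonoid.ofList [X.a, X.b, X.a, X.b] ∧
      v = FreeMonoid.ofList [X.a, X.b, X.a]) ∨
    (u = FreeMonoid.ofList [X.a, X.c] ∧ v = FreeMonoid.ofList [X.c, X.a]) ∨
    (u = FreeMonoid.ofList [X.b, X.c, X.b, X.c] ∧
      v = FreeMonoid.ofList [X.b, X.c, X.b])

/-- The Artin–Krammer monoid `⟨a, b, c | abab = aba, ac = ca, bcbc = bcb⟩`. -/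
def ArtinKrammerMonoid : Type := (conGen akRel).Quotient

instance : Monoid ArtinKrammerMonoid := by unfold ArtinKrammerMonoid; infer_instance

/-!
The monoid acts on the right on its normal forms, stored as reversed words: a generator is
pushed onto the word unless it completes one of the factors `a b a^(k+1) · b`,
`b c b^(m+1) · c` or `a b c a^p b^(m+1) · c` (with `c` first moved left past the trailing
`a`'s, as `ac = ca`), in which case it is absorbed. These steps satisfy the defining relations,
and each step multiplies the element represented by a state by the generator, so the orbit map
of the empty word is injective. Since no step shortens a state, collapsing all states longer
than `n` into a sink yields an action on a finite set; for `n` large enough it still separates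
two given elements.
-/

open List MulOpposite

section Truncation

variable {S : Type} (size : S → ℕ) (n : ℕ)

def toSublevel (s : S) : Option {s | size s ≤ n} :=
  if h : size s ≤ n then some ⟨s, h⟩ else none

def truncate (f : S → S) (o : Option {s | size s ≤ n}) : Option {s | size s ≤ n} :=
  o.bind fun t => toSublevel size n (f t)

variable {size n}

theorem toSublevel_of_le {s : S} (h : size s ≤ n) : toSublevel size n s = some ⟨s, h⟩ :=
  dif_pos h

theorem eq_of_toSublevel_eq {s t : S} (hs : size s ≤ n) (ht : size t ≤ n)
    (h : toSublevel size n s = toSublevel size n t) : s = t := by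
  rw [toSublevel_of_le hs, toSublevel_of_le ht] at h
  exact congrArg Subtype.val (Option.some.inj h)

theorem truncate_id : truncate size n id = id := by
  funext o
  cases o with
  | none => rfl
  | some t => exact toSublevel_of_le t.2

theorem truncate_comp {f g : S → S} (hf : ∀ s, size s ≤ size (f s)) :
    truncate size n (f ∘ g) = truncate size n f ∘ truncate size n g := by
  funext o
  cases o with
  | none => rfl
  | some t =>
    by_cases h : size (g t) ≤ n
    · simp [truncate, toSublevel, h]
    · have h' : ¬size (f (g t)) ≤ n := fun h' => h ((hf _).trans h')
      simp [truncate, toSublevel, h, h']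

end Truncation

section RightAction

variable {M S : Type} [Monoid M] (act : M →* (Function.End S)ᵐᵒᵖ) {size : S → ℕ}

def truncatedAction (hmono : ∀ x s, size s ≤ size ((act x).unop s)) (n : ℕ) :
    M →* (Function.End (Option {s | size s ≤ n}))ᵐᵒᵖ where
  toFun x := op (truncate size n (act x).unop)
  map_one' := by rw [map_one, unop_one]; exact congrArg op truncate_id
  map_mul' x y := by
    rw [map_mul, unop_mul]
    exact congrArg op (truncate_comp (hmono y))

theorem residuallyFinite_of_rightAction (hfin : ∀ n, {s | size s ≤ n}.Finite)
    (hmono : ∀ x s, size s ≤ size ((act x).unop s)) (s₀ : S) (eval : S → M)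
    (heval : ∀ x, eval ((act x).unop s₀) = x) : ResiduallyFinite M := by
  intro x y hxy
  set n := max (size ((act x).unop s₀)) (size ((act y).unop s₀))
  have : Finite {s | size s ≤ n} := (hfin n).to_subtype
  have : Finite (Function.End (Option {s | size s ≤ n}))ᵐᵒᵖ :=
    .of_equiv (Option {s | size s ≤ n} → Option {s | size s ≤ n}) opEquiv
  refine ⟨_, inferInstance, truncatedAction act hmono n, inferInstance, fun h => hxy ?_⟩
  have h₀ := congrArg (fun f => f.unop (some ⟨s₀, (hmono x s₀).trans (le_max_left _ _)⟩)) h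
  rw [← heval x, ← heval y, eq_of_toSublevel_eq (le_max_left _ _) (le_max_right _ _) h₀]

end RightAction

theorem mul_mul_pow_succ_mul_absorb {M : Type*} [Monoid M] {x y : M}
    (h : x * y * x * y = x * y * x) (p : M) (k : ℕ) :
    p * x * y * x ^ (k + 1) * y = p * x * y * x ^ (k + 1) := by
  simp only [mul_assoc]
  congr 1
  simp only [← mul_assoc]
  induction k with
  | zero => simpa using h
  | succ k ih =>
    calc x * y * x ^ (k + 2) * y = x * y * x ^ (k + 1) * (x * y) := by
          simp only [pow_succ, mul_assoc]
      _ = x * y * x ^ k * (x * y * x * y) := by rw [← ih]; simp only [pow_succ, mul_assoc]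
      _ = x * y * x ^ (k + 1) * y * x := by rw [h]; simp only [pow_succ, mul_assoc]
      _ = x * y * x ^ (k + 2) := by rw [ih]; simp only [pow_succ, mul_assoc]

theorem List.exists_eq_replicate_append_dropWhile {α : Type*} [BEq α] [LawfulBEq α] (x : α) :
    ∀ l : List α, ∃ k, l = replicate k x ++ l.dropWhile (· == x)
  | [] => ⟨0, rfl⟩
  | y :: l => by
    by_cases h : y = x
    · obtain ⟨k, hk⟩ := exists_eq_replicate_append_dropWhile x l
      exact ⟨k + 1, by simp [h, replicate_succ, ← hk]⟩
    · exact ⟨0, by simp [h]⟩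

open X

def gen (x : X) : ArtinKrammerMonoid := (conGen akRel).mk' (FreeMonoid.of x)

theorem mk'_eq_of_akRel {u v : FreeMonoid X} (h : akRel u v) :
    (conGen akRel).mk' u = (conGen akRel).mk' v :=
  (Con.eq _).2 (ConGen.Rel.of _ _ h)

theorem gen_abab : gen a * gen b * gen a * gen b = gen a * gen b * gen a :=
  mk'_eq_of_akRel (.inl ⟨rfl, rfl⟩)

theorem commute_gen_a_c : Commute (gen a) (gen c) :=
  mk'_eq_of_akRel (.inr (.inl ⟨rfl, rfl⟩))

theorem gen_bcbc : gen b * gen c * gen b * gen c = gen b * gen c * gen b :=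
  mk'_eq_of_akRel (.inr (.inr ⟨rfl, rfl⟩))

theorem induction_on_gen {P : ArtinKrammerMonoid → Prop} (one : P 1)
    (gen_mul : ∀ g x, P x → P (gen g * x)) (x : ArtinKrammerMonoid) : P x := by
  induction x using Con.induction_on with | H w => ?_
  induction w using FreeMonoid.inductionOn' with
  | one => exact one
  | of_mul g w ih => exact gen_mul g _ ih

theorem mul_gen_a_pow_mul_gen_c (p : ArtinKrammerMonoid) (k : ℕ) :
    p * gen a ^ k * gen c = p * gen c * gen a ^ k := by
  rw [mul_assoc, (commute_gen_a_c.pow_left k).eq, ← mul_assoc]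

theorem gen_abc_absorb (p : ArtinKrammerMonoid) (i j : ℕ) :
    p * gen a * gen b * gen c * gen a ^ i * gen b ^ (j + 1) * gen c =
      p * gen a * gen b * gen c * gen a ^ i * gen b ^ (j + 1) := by
  cases i with
  | zero => simpa using mul_mul_pow_succ_mul_absorb gen_bcbc (p * gen a) j
  | succ i =>
    calc _ = p * gen a * gen b * gen a ^ (i + 1) * gen b * gen c * gen b ^ (j + 1) * gen c := by
          rw [← mul_gen_a_pow_mul_gen_c, mul_mul_pow_succ_mul_absorb gen_abab]
      _ = p * gen a * gen b * gen a ^ (i + 1) * gen b * gen c * gen b ^ (j + 1) := by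
          rw [mul_mul_pow_succ_mul_absorb gen_bcbc]
      _ = _ := by
          rw [mul_mul_pow_succ_mul_absorb gen_abab, mul_gen_a_pow_mul_gen_c]

/-- The element represented by a state: states are words written from right to left. -/
def eval : List X → ArtinKrammerMonoid
  | [] => 1
  | x :: s => eval s * gen x

@[simp] theorem eval_nil : eval [] = 1 := rfl

@[simp] theorem eval_cons (x : X) (s : List X) : eval (x :: s) = eval s * gen x := rfl

@[simp] theorem eval_append (l s : List X) : eval (l ++ s) = eval s * eval l := by
  induction l with
  | nil => simp
  | cons x l ih => simp [ih, mul_assoc]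

@[simp] theorem eval_replicate (k : ℕ) (x : X) : eval (replicate k x) = gen x ^ k := by
  induction k with
  | zero => rfl
  | succ k ih => simp [replicate_succ, ih, pow_succ]

def absorbsB : List X → Bool
  | a :: s => [b, a].isPrefixOf (s.dropWhile (· == a))
  | _ => false

def absorbsCAfterB (t : List X) : Bool :=
  [c, b].isPrefixOf (t.dropWhile (· == b)) ||
    [c, b, a].isPrefixOf ((t.dropWhile (· == b)).dropWhile (· == a))

def stepB (s : List X) : List X := if absorbsB s then s else b :: s

def stepC : List X → List X
  | [] => [c]
  | a :: s => a :: stepC s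
  | b :: s => if absorbsCAfterB s then b :: s else c :: b :: s
  | c :: s => c :: c :: s

def step : X → List X → List X
  | a => (a :: ·)
  | b => stepB
  | c => stepC

theorem step_a (s : List X) : step a s = a :: s := rfl

theorem step_b (s : List X) : step b s = stepB s := rfl

theorem step_c (s : List X) : step c s = stepC s := rfl

theorem eq_of_absorbsB {s : List X} (h : absorbsB s = true) :
    ∃ j q, s = replicate (j + 1) a ++ b :: a :: q := by
  match s, h with
  | a :: s, h =>
    obtain ⟨q, hq⟩ := isPrefixOf_iff_prefix.1 h
    obtain ⟨j, hj⟩ := List.exists_eq_replicate_append_dropWhile a s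
    exact ⟨j, q, by rw [hj, ← hq]; rfl⟩

theorem eq_of_absorbsCAfterB {t : List X} (h : absorbsCAfterB t = true) :
    ∃ m, (∃ q, t = replicate m b ++ c :: b :: q) ∨
      ∃ p r, t = replicate m b ++ replicate p a ++ c :: b :: a :: r := by
  obtain ⟨m, hm⟩ := List.exists_eq_replicate_append_dropWhile b t
  obtain ⟨p, hp⟩ := List.exists_eq_replicate_append_dropWhile a (t.dropWhile (· == b))
  refine ⟨m, ?_⟩
  rcases Bool.or_eq_true_iff.1 h with h | h
  · obtain ⟨q, hq⟩ := isPrefixOf_iff_prefix.1 h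
    exact .inl ⟨q, by rw [hm, ← hq]; rfl⟩
  · obtain ⟨r, hr⟩ := isPrefixOf_iff_prefix.1 h
    exact .inr ⟨p, r, by rw [hm, hp, ← hr, append_assoc]; rfl⟩

theorem absorbsCAfterB_cons_b (t : List X) : absorbsCAfterB (b :: t) = absorbsCAfterB t := by
  simp [absorbsCAfterB]

theorem stepB_cons_b (t : List X) : stepB (b :: t) = b :: b :: t := rfl

theorem stepB_cons_c (t : List X) : stepB (c :: t) = b :: c :: t := rfl

theorem stepC_replicate_a_append (k : ℕ) (s : List X) :
    stepC (replicate k a ++ s) = replicate k a ++ stepC s := by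
  induction k with
  | zero => rfl
  | succ k ih => simp [replicate_succ, stepC, ih]

theorem length_le_stepC : ∀ s : List X, s.length ≤ (stepC s).length
  | [] => by simp [stepC]
  | a :: s => by simpa [stepC] using length_le_stepC s
  | b :: s => by unfold stepC; split_ifs <;> simp
  | c :: s => by simp [stepC]

theorem length_le_step (g : X) (s : List X) : s.length ≤ (step g s).length := by
  cases g with
  | a => simp [step_a]
  | b => simp only [step_b, stepB]; split_ifs <;> simp
  | c => exact length_le_stepC s

theorem step_a_c (s : List X) : step c (step a s) = step a (step c s) := rfl

theorem step_abab (s : List X) :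
    step b (step a (step b (step a s))) = step a (step b (step a s)) := by
  simp only [step_a, step_b, stepB]
  split_ifs <;> simp_all [absorbsB]

theorem step_bcbc (s : List X) :
    step c (step b (step c (step b s))) = step b (step c (step b s)) := by
  simp only [step_b, step_c]
  by_cases hB : absorbsB s
  · obtain ⟨j, q, rfl⟩ := eq_of_absorbsB hB
    have h₁ : stepB (replicate (j + 1) a ++ b :: a :: q) = replicate (j + 1) a ++ b :: a :: q :=
      if_pos hB
    rw [h₁, stepC_replicate_a_append, stepC]
    by_cases hC : absorbsCAfterB (a :: q)
    · rw [if_pos hC, h₁, stepC_replicate_a_append, stepC, if_pos hC]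
    · have h₂ : stepB (replicate (j + 1) a ++ c :: b :: a :: q) =
          b :: (replicate (j + 1) a ++ c :: b :: a :: q) := by
        simp [stepB, absorbsB, replicate_succ, List.isPrefixOf]
      have h₃ : absorbsCAfterB (replicate (j + 1) a ++ c :: b :: a :: q) = true := by
        simp [absorbsCAfterB, replicate_succ]
      rw [if_neg hC, h₂, stepC, if_pos h₃]
  · have h₁ : stepB s = b :: s := if_neg hB
    rw [h₁, stepC]
    by_cases hC : absorbsCAfterB s
    · rw [if_pos hC, stepB_cons_b, stepC, absorbsCAfterB_cons_b, if_pos hC]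
    · rw [if_neg hC, stepB_cons_c, stepC, if_pos (by simp [absorbsCAfterB])]

theorem eval_stepB (s : List X) : eval (stepB s) = eval s * gen b := by
  unfold stepB
  split_ifs with h
  · obtain ⟨j, q, rfl⟩ := eq_of_absorbsB h
    simpa using (mul_mul_pow_succ_mul_absorb gen_abab (eval q) j).symm
  · rfl

theorem eval_stepC : ∀ s : List X, eval (stepC s) = eval s * gen c
  | [] => rfl
  | a :: s => by
    rw [stepC, eval_cons, eval_stepC s, eval_cons, ← pow_one (gen a), mul_gen_a_pow_mul_gen_c]
  | b :: t => by
    rw [stepC]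
    split_ifs with h
    · obtain ⟨m, ⟨q, rfl⟩ | ⟨p, r, rfl⟩⟩ := eq_of_absorbsCAfterB h
      · simpa [mul_assoc, ← pow_succ] using
          (mul_mul_pow_succ_mul_absorb gen_bcbc (eval q) m).symm
      · simpa [mul_assoc, ← pow_succ] using (gen_abc_absorb (eval r) p m).symm
    · rfl
  | c :: t => rfl

theorem eval_step (g : X) (s : List X) : eval (step g s) = eval s * gen g := by
  cases g with
  | a => rfl
  | b => exact eval_stepB s
  | c => exact eval_stepC s

def act : ArtinKrammerMonoid →* (Function.End (List X))ᵐᵒᵖ :=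
  Con.lift _ (FreeMonoid.lift fun g => op (step g)) <| Con.conGen_le.2 fun u v h => by
    apply unop_injective
    funext s
    rcases h with ⟨rfl, rfl⟩ | ⟨rfl, rfl⟩ | ⟨rfl, rfl⟩
    · exact step_abab s
    · exact step_a_c s
    · exact step_bcbc s

theorem act_gen_mul (g : X) (x : ArtinKrammerMonoid) (s : List X) :
    (act (gen g * x)).unop s = (act x).unop (step g s) := by
  rw [map_mul, unop_mul]
  rfl

theorem length_le_act (x : ArtinKrammerMonoid) (s : List X) :
    s.length ≤ ((act x).unop s).length := by
  induction x using induction_on_gen generalizing s with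
  | one => exact le_rfl
  | gen_mul g x ih => exact (length_le_step g s).trans (act_gen_mul g x s ▸ ih _)

theorem eval_act (x : ArtinKrammerMonoid) (s : List X) : eval ((act x).unop s) = eval s * x := by
  induction x using induction_on_gen generalizing s with
  | one => exact (mul_one _).symm
  | gen_mul g x ih => rw [act_gen_mul, ih, eval_step, mul_assoc]

/-- Example `ex-akram` with Corollary `cor-resid`: the Artin–Krammer
monoid `⟨a, b, c | abab = aba, ac = ca, bcbc = bcb⟩` is residually finite. -/
theorem artinKrammer_residually_finite : ResiduallyFinite ArtinKrammerMonoid :=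
  residuallyFinite_of_rightAction act (List.finite_length_le X) length_le_act [] eval
    fun x => by rw [eval_act, eval_nil, one_mul]

end Stmt19
end
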